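/- arXiv:2203.15994 — 2 statements merged into one kernel-verified Lean document; each statement's English description precedes it below -/
import Mathlib

section
/- Let K be a compact subset of X, let Σ ⊆ X and δ > 0 be such that for every f ∈ K there exists g ∈ Σ with ‖f − g‖_X ≤ δ. Let f ∈ K and w := λ(f). Suppose f̂ ∈ Σ minimizes the loss L_K(g) := ‖λ(g) − w‖ + dist(g,K)_X over g ∈ Σ, where dist(g,K)_X := inf_{h ∈ K} ‖g − h‖_X. Then ‖f − f̂‖_X ≤ 2δ + 2 R(K(w, 4δ))_X. -/
/-- Chebyshev radius of a set `S` in a normed space `X`: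
`R(S) = inf_{z ∈ X} sup_{f ∈ S} ‖f - z‖`. -/
noncomputable def chebRad {X : Type*} [NormedAddCommGroup X] (S : Set X) : ℝ :=
  ⨅ z : X, ⨆ f : S, ‖(f : X) - z‖

/-- Weighted euclidean norm on `ℝ^m`: `‖v‖ = ( m⁻¹ ∑ v_j² )^{1/2}`. -/
noncomputable def wNorm {m : ℕ} (v : Fin m → ℝ) : ℝ :=
  Real.sqrt ((∑ j, v j ^ 2) / m)

/-! Comparing `f̂` with the member `g₀ ∈ Σ` that `δ`-approximates `f` shows that the loss of `f̂`
is at most `2δ`. A nearest point `h ∈ K` to `f̂` is then within `2δ` of `f̂` and its data lie within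
`4δ` of `w`, so `f` and `h` both lie in `K(w, 4δ)` and are at most `2 R(K(w, 4δ))` apart. -/

section WNorm

variable {m : ℕ}

lemma wNorm_nonneg (v : Fin m → ℝ) : 0 ≤ wNorm v := Real.sqrt_nonneg _

lemma wNorm_eq_norm_toLp_div_sqrt (v : Fin m → ℝ) :
    wNorm v = ‖WithLp.toLp 2 v‖ / Real.sqrt m := by
  rw [wNorm, Real.sqrt_div (Finset.sum_nonneg fun _ _ => sq_nonneg _), EuclideanSpace.norm_eq]
  simp [Real.norm_eq_abs, sq_abs]

lemma wNorm_add_le (a b : Fin m → ℝ) : wNorm (fun j => a j + b j) ≤ wNorm a + wNorm b := by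
  simp only [wNorm_eq_norm_toLp_div_sqrt, ← add_div]
  gcongr
  exact norm_add_le (WithLp.toLp 2 a) (WithLp.toLp 2 b)

lemma wNorm_le_of_forall_abs_le {v : Fin m → ℝ} {c : ℝ} (hc : 0 ≤ c) (h : ∀ j, |v j| ≤ c) :
    wNorm v ≤ c := by
  rw [wNorm, ← Real.sqrt_sq hc]
  apply Real.sqrt_le_sqrt
  rcases Nat.eq_zero_or_pos m with rfl | hm
  · simp [sq_nonneg]
  · rw [div_le_iff₀ (by exact_mod_cast hm)]
    calc ∑ j, v j ^ 2 ≤ ∑ _j : Fin m, c ^ 2 :=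
          Finset.sum_le_sum fun j _ => sq_le_sq' (abs_le.mp (h j)).1 (abs_le.mp (h j)).2
      _ = c ^ 2 * m := by simp [mul_comm]

lemma wNorm_apply_sub_apply_le_norm_sub {E : Type*} [SeminormedAddCommGroup E]
    [NormedSpace ℝ E] {lam : Fin m → E →L[ℝ] ℝ} (hlam : ∀ j, ‖lam j‖ ≤ 1) (g h : E) :
    wNorm (fun j => lam j g - lam j h) ≤ ‖g - h‖ :=
  wNorm_le_of_forall_abs_le (norm_nonneg _) fun j => by
    rw [← map_sub, ← Real.norm_eq_abs]
    exact ((lam j).le_of_opNorm_le (hlam j) _).trans_eq (one_mul _)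

end WNorm

lemma norm_sub_le_two_mul_chebRad {X : Type*} [NormedAddCommGroup X] {S : Set X}
    (hS : Bornology.IsBounded S) {x y : X} (hx : x ∈ S) (hy : y ∈ S) :
    ‖x - y‖ ≤ 2 * chebRad S := by
  have : Nonempty X := ⟨x⟩
  suffices ‖x - y‖ / 2 ≤ chebRad S by linarith
  refine le_ciInf fun z => ?_
  obtain ⟨r, hr⟩ := hS.subset_closedBall z
  have hbdd : BddAbove (Set.range fun u : S => ‖(u : X) - z‖) :=
    ⟨r, by rintro _ ⟨u, rfl⟩; simpa [dist_eq_norm] using hr u.2⟩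
  have hxz : ‖x - z‖ ≤ ⨆ u : S, ‖(u : X) - z‖ := le_ciSup hbdd ⟨x, hx⟩
  have hyz : ‖y - z‖ ≤ ⨆ u : S, ‖(u : X) - z‖ := le_ciSup hbdd ⟨y, hy⟩
  have := norm_sub_le_norm_sub_add_norm_sub x z y
  rw [norm_sub_rev z y] at this
  linarith

theorem stmt_5_general
    {X : Type*} [NormedAddCommGroup X] [NormedSpace ℝ X]
    {m : ℕ}
    (lam : Fin m → X →L[ℝ] ℝ) (hlam : ∀ j, ‖lam j‖ ≤ 1)
    (K : Set X) (hK : IsCompact K)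
    (Sig : Set X) (δ : ℝ)
    (happrox : ∀ f ∈ K, ∃ g ∈ Sig, ‖f - g‖ ≤ δ)
    (f : X) (hf : f ∈ K)
    (fhat : X)
    (hmin : ∀ g ∈ Sig,
      wNorm (fun j => lam j fhat - lam j f) + Metric.infDist fhat K ≤
        wNorm (fun j => lam j g - lam j f) + Metric.infDist g K) :
    ‖f - fhat‖ ≤ 2 * δ +
      2 * chebRad {u ∈ K | wNorm (fun j => lam j u - lam j f) ≤ 4 * δ} := by
  have hlip := wNorm_apply_sub_apply_le_norm_sub hlam
  obtain ⟨g₀, hg₀, hfg₀⟩ := happrox f hf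
  have hδ : 0 ≤ δ := (norm_nonneg _).trans hfg₀
  have hloss : wNorm (fun j => lam j fhat - lam j f) + Metric.infDist fhat K ≤ 2 * δ := by
    have hdata := hlip g₀ f
    have hdist : Metric.infDist g₀ K ≤ ‖g₀ - f‖ := by
      rw [← dist_eq_norm]; exact Metric.infDist_le_dist_of_mem hf
    rw [norm_sub_rev] at hfg₀
    linarith [hmin g₀ hg₀]
  obtain ⟨h, hhK, hfhat_h⟩ := hK.exists_infDist_eq_dist ⟨f, hf⟩ fhat
  rw [hfhat_h, dist_eq_norm] at hloss
  have hh : wNorm (fun j => lam j h - lam j f) ≤ 4 * δ := by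
    have htri := wNorm_add_le (fun j => lam j h - lam j fhat) (fun j => lam j fhat - lam j f)
    simp only [sub_add_sub_cancel] at htri
    linarith [hlip h fhat, norm_sub_rev h fhat, wNorm_nonneg (fun j => lam j fhat - lam j f)]
  have hf' : wNorm (fun j => lam j f - lam j f) ≤ 4 * δ := by simpa [wNorm] using hδ
  set S := {u ∈ K | wNorm (fun j => lam j u - lam j f) ≤ 4 * δ}
  have hcheb := norm_sub_le_two_mul_chebRad (hK.isBounded.subset (Set.sep_subset _ _))
    (show f ∈ S from ⟨hf, hf'⟩) (show h ∈ S from ⟨hhK, hh⟩)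
  linarith [norm_sub_le_norm_sub_add_norm_sub f h fhat, norm_sub_rev h fhat,
    wNorm_nonneg (fun j => lam j fhat - lam j f)]

/-- For a general compact model class `K`, a minimizer over `Σ` of the loss
`L_K(g) := ‖λ(g) − w‖ + dist(g,K)_X` satisfies
`‖f − f̂‖_X ≤ 2δ + 2 R(K(w, 4δ))`. -/
theorem stmt_5
    {X : Type*} [NormedAddCommGroup X] [NormedSpace ℝ X] [CompleteSpace X]
    {m : ℕ} (hm : 0 < m)
    (lam : Fin m → X →L[ℝ] ℝ) (hlam : ∀ j, ‖lam j‖ ≤ 1)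
    (K : Set X) (hK : IsCompact K)
    (Sig : Set X) (δ : ℝ) (hδ : 0 < δ)
    (happrox : ∀ f ∈ K, ∃ g ∈ Sig, ‖f - g‖ ≤ δ)
    (f : X) (hf : f ∈ K)
    (fhat : X) (hfhat : fhat ∈ Sig)
    (hmin : ∀ g ∈ Sig,
      wNorm (fun j => lam j fhat - lam j f) + Metric.infDist fhat K ≤
        wNorm (fun j => lam j g - lam j f) + Metric.infDist g K) :
    ‖f - fhat‖ ≤ 2 * δ +
      2 * chebRad {u ∈ K | wNorm (fun j => lam j u - lam j f) ≤ 4 * δ} :=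
  stmt_5_general lam hlam K hK Sig δ happrox f hf fhat hmin
end

section
/- Let f ∈ K and w := λ_x(f). If ε > 0 and g ∈ C(Ω) satisfies ‖λ_x(g) − w‖ ≤ ε and dist(g, K)_{C(Ω)} ≤ ε (i.e. there is h ∈ K with ‖g − h‖_{C(Ω)} ≤ ε), then ‖j(f) − j(g)‖_X ≤ C_X ε + 2 R(K(w, 2ε))_X. -/
/-! Proof idea: pick `h ∈ K` with `‖g - h‖ ≤ ε`. Both `f` and `h` lie in `K(w, 2ε)`, so for
every centre `z` the triangle inequality through `z` gives `‖j f - j h‖ ≤ 2 R(K(w, 2ε))`, while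
`‖j h - j g‖ ≤ C_X ε`. -/

/-- Chebyshev radius in `X` of the image under `J` of a set `S`:
`R(S)_X = inf_{z ∈ X} sup_{f ∈ S} ‖J f - z‖`. -/
noncomputable def chebRadMap {A X : Type*} [NormedAddCommGroup X]
    (J : A → X) (S : Set A) : ℝ :=
  ⨅ z : X, ⨆ f : S, ‖J (f : A) - z‖

open Bornology

section ChebyshevRadius

variable {A X : Type*} [NormedAddCommGroup X] {J : A → X} {S : Set A}

lemma norm_sub_le_two_mul_chebRadMap (hS : IsBounded (J '' S)) {a b : A} (ha : a ∈ S)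
    (hb : b ∈ S) : ‖J a - J b‖ ≤ 2 * chebRadMap J S := by
  obtain ⟨R, hR⟩ := hS.exists_norm_le
  have hbdd : ∀ z : X, BddAbove (Set.range fun u : S => ‖J u - z‖) := by
    refine fun z => ⟨R + ‖z‖, ?_⟩
    rintro _ ⟨u, rfl⟩
    exact (norm_sub_le _ _).trans (add_le_add_left (hR _ ⟨u, u.2, rfl⟩) _)
  rw [← div_le_iff₀' two_pos]
  refine le_ciInf fun z => ?_
  have hab : ‖J a - J b‖ ≤ ‖J a - z‖ + ‖J b - z‖ := by
    simpa only [norm_sub_rev z] using norm_sub_le_norm_sub_add_norm_sub (J a) z (J b)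
  have ha' := le_ciSup (hbdd z) ⟨a, ha⟩
  have hb' := le_ciSup (hbdd z) ⟨b, hb⟩
  linarith

end ChebyshevRadius

section WeightedNorm

variable {m : ℕ}

lemma wNorm_eq_norm_toLp_div (v : Fin m → ℝ) :
    wNorm v = ‖WithLp.toLp 2 v‖ / √m := by
  simp [wNorm, EuclideanSpace.norm_eq, Real.sqrt_div' _ (Nat.cast_nonneg m)]

lemma wNorm_add_le_s6 (v w : Fin m → ℝ) : wNorm (v + w) ≤ wNorm v + wNorm w := by
  simp only [wNorm_eq_norm_toLp_div, WithLp.toLp_add, ← add_div]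
  exact div_le_div_of_nonneg_right (norm_add_le _ _) (Real.sqrt_nonneg _)

lemma wNorm_le_norm (v : Fin m → ℝ) : wNorm v ≤ ‖v‖ := by
  rw [wNorm, ← Real.sqrt_sq (norm_nonneg v)]
  refine Real.sqrt_le_sqrt (div_le_of_le_mul₀ (Nat.cast_nonneg m) (sq_nonneg _) ?_)
  calc ∑ j, v j ^ 2 ≤ ∑ _j : Fin m, ‖v‖ ^ 2 := by
        refine Finset.sum_le_sum fun j _ => sq_le_sq.mpr ?_
        simpa only [abs_norm, Real.norm_eq_abs] using norm_le_pi_norm v j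
    _ = ‖v‖ ^ 2 * m := by simp [mul_comm]

lemma wNorm_sample_sub_le {Ω : Type*} [TopologicalSpace Ω] [CompactSpace Ω] (x : Fin m → Ω)
    (u v : C(Ω, ℝ)) : wNorm (fun j => u (x j) - v (x j)) ≤ ‖u - v‖ :=
  (wNorm_le_norm _).trans <| (pi_norm_le_iff_of_nonneg (norm_nonneg _)).mpr fun j =>
    (u - v).norm_coe_le_norm (x j)

end WeightedNorm

lemma nonneg_of_forall_norm_le_mul {E F : Type*} [NormedAddCommGroup E] [Nontrivial E]
    [SeminormedAddCommGroup F] {T : E → F} {C : ℝ} (hT : ∀ u, ‖T u‖ ≤ C * ‖u‖) :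
    0 ≤ C := by
  obtain ⟨u, hu⟩ := exists_ne (0 : E)
  exact nonneg_of_mul_nonneg_left ((norm_nonneg _).trans (hT u)) (norm_pos_iff.mpr hu)

theorem stmt_6_general
    {d : ℕ} {Ω : Set (EuclideanSpace ℝ (Fin d))} [CompactSpace Ω]
    {X : Type*} [NormedAddCommGroup X] [NormedSpace ℝ X]
    {m : ℕ} (hm : 0 < m) (x : Fin m → Ω)
    (J : C(Ω, ℝ) →ₗ[ℝ] X)
    (CX : ℝ) (hJ : ∀ g : C(Ω, ℝ), ‖J g‖ ≤ CX * ‖g‖)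
    (K : Set C(Ω, ℝ)) (hK : IsCompact K)
    (f : C(Ω, ℝ)) (hf : f ∈ K)
    (ε : ℝ) (g : C(Ω, ℝ))
    (hg1 : wNorm (fun j => g (x j) - f (x j)) ≤ ε)
    (hg2 : ∃ h ∈ K, ‖g - h‖ ≤ ε) :
    ‖J f - J g‖ ≤ CX * ε +
      2 * chebRadMap (fun u => J u)
        {u ∈ K | wNorm (fun j => u (x j) - f (x j)) ≤ 2 * ε} := by
  obtain ⟨h, hhK, hgh⟩ := hg2
  have hε : 0 ≤ ε := (norm_nonneg _).trans hgh
  have : Nonempty Ω := ⟨x ⟨0, hm⟩⟩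
  have hCX : 0 ≤ CX := nonneg_of_forall_norm_le_mul hJ
  have hfS : wNorm (fun j => f (x j) - f (x j)) ≤ 2 * ε :=
    (wNorm_sample_sub_le x f f).trans (by simpa using hε)
  have hhS : wNorm (fun j => h (x j) - f (x j)) ≤ 2 * ε := by
    have hsplit := wNorm_add_le_s6 (fun j => h (x j) - g (x j)) (fun j => g (x j) - f (x j))
    have hhg := (wNorm_sample_sub_le x h g).trans (norm_sub_rev h g ▸ hgh)
    simp only [Pi.add_def, sub_add_sub_cancel] at hsplit
    linarith
  set S := {u ∈ K | wNorm (fun j => u (x j) - f (x j)) ≤ 2 * ε}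
  have hbdd : IsBounded ((fun u => J u) '' S) :=
    (hK.image (J.mkContinuous CX hJ).continuous).isBounded.subset
      (Set.image_mono fun _ hu => hu.1)
  calc ‖J f - J g‖ ≤ ‖J h - J g‖ + ‖J f - J h‖ := by
        rw [add_comm]; exact norm_sub_le_norm_sub_add_norm_sub _ _ _
    _ ≤ CX * ε + 2 * chebRadMap (fun u => J u) S := by
        gcongr
        · rw [← map_sub]
          exact (hJ _).trans (mul_le_mul_of_nonneg_left (norm_sub_rev h g ▸ hgh) hCX)
        · exact norm_sub_le_two_mul_chebRadMap hbdd ⟨hf, hfS⟩ ⟨hhK, hhS⟩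

/-- Point-value data: if `g ∈ C(Ω)` fits the data `w = λ_x(f)` to accuracy `ε` and
`dist(g,K)_{C(Ω)} ≤ ε`, then `‖j(f) − j(g)‖_X ≤ C_X ε + 2 R(K(w,2ε))_X`. -/
theorem stmt_6
    {d : ℕ} {Ω : Set (EuclideanSpace ℝ (Fin d))} [CompactSpace Ω]
    {X : Type*} [NormedAddCommGroup X] [NormedSpace ℝ X] [CompleteSpace X]
    {m : ℕ} (hm : 0 < m) (x : Fin m → Ω)
    (J : C(Ω, ℝ) →ₗ[ℝ] X) (hJinj : Function.Injective J)
    (CX : ℝ) (hJ : ∀ g : C(Ω, ℝ), ‖J g‖ ≤ CX * ‖g‖)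
    (K : Set C(Ω, ℝ)) (hK : IsCompact K)
    (f : C(Ω, ℝ)) (hf : f ∈ K)
    (ε : ℝ) (hε : 0 < ε) (g : C(Ω, ℝ))
    (hg1 : wNorm (fun j => g (x j) - f (x j)) ≤ ε)
    (hg2 : ∃ h ∈ K, ‖g - h‖ ≤ ε) :
    ‖J f - J g‖ ≤ CX * ε +
      2 * chebRadMap (fun u => J u)
        {u ∈ K | wNorm (fun j => u (x j) - f (x j)) ≤ 2 * ε} :=
  stmt_6_general hm x J CX hJ K hK f hf ε g hg1 hg2
end
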